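/- arXiv:2106.15215 — 4 statements merged into one kernel-verified Lean document; each statement's English description precedes it below -/
import Mathlib

section
/- Let g : [0,∞) → (0,∞) be continuous with r^{d+α} g(r) → C as r → ∞ for some constant C > 0. For β > 0 define w_β(r) = ∫_0^∞ e^{-βt} t^{-d/α} g(r t^{-1/α}) dt. Then r^{d+α} w_β(r) → C/β² as r → ∞. -/
/-!
Put `h s = s ^ (d + α) * g s`. Since `t ^ (-d / α) = t * (t ^ (-1 / α)) ^ (d + α)`, the
substitution gives `r ^ (d + α) * w_β r = ∫ t e^{-βt} h (r t^{-1/α}) dt`. The function `h` is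
continuous with limit `C`, hence bounded on `[0, ∞)`, so dominated convergence yields
`C ∫ t e^{-βt} dt = C / β ^ 2`.
-/

open MeasureTheory Filter Real Set Metric

theorem isBounded_image_Ici_of_tendsto {E : Type*} [PseudoMetricSpace E] {f : ℝ → E} {a : ℝ}
    {x : E} (hf : ContinuousOn f (Ici a)) (hlim : Tendsto f atTop (nhds x)) :
    Bornology.IsBounded (f '' Ici a) := by
  obtain ⟨s, hs, hbdd⟩ := exists_isBounded_image_of_tendsto hlim
  obtain ⟨A, hA⟩ := mem_atTop_sets.1 hs
  have hsplit : Ici a ⊆ Icc a A ∪ s := fun y hy =>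
    (le_or_gt y A).imp (fun hyA => ⟨hy, hyA⟩) (fun hAy => hA y hAy.le)
  refine Bornology.IsBounded.subset ?_ (image_mono hsplit)
  rw [image_union]
  exact (isCompact_Icc.image_of_continuousOn (hf.mono Icc_subset_Ici_self)).isBounded.union hbdd

theorem tendsto_setIntegral_mul_comp_mul_of_tendsto {k h φ : ℝ → ℝ} {C : ℝ}
    (hk : IntegrableOn k (Ioi 0)) (hh : Continuous h) (hφ : Measurable φ)
    (hφpos : ∀ t ∈ Ioi (0 : ℝ), 0 < φ t) (hlim : Tendsto h atTop (nhds C)) :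
    Tendsto (fun r => ∫ t in Ioi 0, k t * h (r * φ t)) atTop
      (nhds ((∫ t in Ioi 0, k t) * C)) := by
  obtain ⟨M, hM⟩ := (isBounded_iff_forall_norm_le.1
    (isBounded_image_Ici_of_tendsto (a := 0) hh.continuousOn hlim))
  rw [← integral_mul_const]
  refine tendsto_integral_filter_of_dominated_convergence (fun t => ‖k t‖ * M)
    (Eventually.of_forall fun r => hk.aestronglyMeasurable.mul
      (hh.measurable.comp (measurable_const.mul hφ)).aestronglyMeasurable)
    ?_ (hk.norm.mul_const M) ?_
  · filter_upwards [eventually_ge_atTop 0] with r hr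
    filter_upwards [ae_restrict_mem measurableSet_Ioi] with t ht
    rw [norm_mul]
    exact mul_le_mul_of_nonneg_left
      (hM _ (mem_image_of_mem h (mul_nonneg hr (hφpos t ht).le))) (norm_nonneg _)
  · filter_upwards [ae_restrict_mem measurableSet_Ioi] with t ht
    exact (hlim.comp (tendsto_id.atTop_mul_const (hφpos t ht))).const_mul (k t)

theorem integral_mul_exp_neg_mul_Ioi {β : ℝ} (hβ : 0 < β) :
    ∫ t in Ioi (0 : ℝ), t * exp (-(β * t)) = 1 / β ^ 2 := by
  have := integral_rpow_mul_exp_neg_mul_Ioi two_pos hβ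
  norm_num [Gamma_two] at this
  simpa using this

theorem integrableOn_mul_exp_neg_mul_Ioi {β : ℝ} (hβ : 0 < β) :
    IntegrableOn (fun t => t * exp (-(β * t))) (Ioi 0) :=
  Integrable.of_integral_ne_zero (by rw [integral_mul_exp_neg_mul_Ioi hβ]; positivity)

theorem rpow_add_mul_rpow_neg_div {r t δ α : ℝ} (hr : 0 ≤ r) (ht : 0 < t) (hα : α ≠ 0) :
    r ^ (δ + α) * t ^ (-δ / α) = t * (r * t ^ (-(1 / α))) ^ (δ + α) := by
  have hexp : -δ / α = 1 + -(1 / α) * (δ + α) := by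
    field_simp
    ring
  rw [hexp, rpow_add ht, rpow_one, mul_rpow hr (rpow_nonneg ht.le _), ← rpow_mul ht.le]
  ring

theorem stmt_0_general (d : ℕ) (α : ℝ) (hα : 0 < α)
    (β : ℝ) (hβ : 0 < β) (C : ℝ)
    (g : ℝ → ℝ) (hg : Continuous g)
    (hglim : Tendsto (fun r : ℝ => r ^ ((d : ℝ) + α) * g r) atTop (nhds C)) :
    Tendsto
      (fun r : ℝ =>
        r ^ ((d : ℝ) + α) *
          ∫ t in Ioi (0 : ℝ), Real.exp (-β * t) * t ^ (-(d : ℝ) / α) * g (r * t ^ (-(1 / α))))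
      atTop (nhds (C / β ^ 2)) := by
  have hh : Continuous fun s : ℝ => s ^ ((d : ℝ) + α) * g s :=
    (continuous_rpow_const (by positivity)).mul hg
  have key := tendsto_setIntegral_mul_comp_mul_of_tendsto (φ := fun t => t ^ (-(1 / α)))
    (integrableOn_mul_exp_neg_mul_Ioi hβ) hh (by fun_prop) (fun t ht => rpow_pos_of_pos ht _) hglim
  rw [integral_mul_exp_neg_mul_Ioi hβ, one_div_mul_eq_div] at key
  refine key.congr' ?_
  filter_upwards [eventually_ge_atTop 0] with r hr
  rw [← integral_const_mul]
  refine setIntegral_congr_fun measurableSet_Ioi fun t ht => ?_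
  rw [show ∀ a b c e : ℝ, a * (b * c * e) = b * (a * c) * e by intros; ring,
    rpow_add_mul_rpow_neg_div hr ht hα.ne', neg_mul]
  ring

theorem stmt_0 (d : ℕ) (hd : 1 ≤ d) (α : ℝ) (hα : 0 < α) (hα2 : α < 2)
    (β : ℝ) (hβ : 0 < β) (C : ℝ) (hC : 0 < C)
    (g : ℝ → ℝ) (hg : Continuous g) (hgpos : ∀ r, 0 ≤ r → 0 < g r)
    (hglim : Tendsto (fun r : ℝ => r ^ ((d : ℝ) + α) * g r) atTop (nhds C)) :
    Tendsto
      (fun r : ℝ =>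
        r ^ ((d : ℝ) + α) *
          ∫ t in Ioi (0 : ℝ), Real.exp (-β * t) * t ^ (-(d : ℝ) / α) * g (r * t ^ (-(1 / α))))
      atTop (nhds (C / β ^ 2)) :=
  stmt_0_general d α hα β hβ C g hg hglim
end

section
/- Let d > α > 0, and let g : [0,∞) → (0,∞) be continuous, bounded, and satisfy r^{d+α} g(r) → C as r → ∞ for some C > 0 (which ensures ∫_0^∞ s^{d-α-1} g(s) ds < ∞). For β > 0 define w_β(r) = ∫_0^∞ e^{-βt} t^{-d/α} g(r t^{-1/α}) dt. Then r^{d-α} w_β(r) → α ∫_0^∞ s^{d-α-1} g(s) ds as r → 0⁺. -/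
/-!
The substitution `t = (r / s) ^ α` turns `r ^ (d - α) * w_β(r)` into
`α * ∫ s in Ioi 0, exp (-β * (r / s) ^ α) * (s ^ (d - α - 1) * g s)`. As `r → 0⁺` the exponential
factor tends to `1` pointwise and stays bounded by `1`, and `s ^ (d - α - 1) * g s` is integrable:
near `0` because `d > α`, near `∞` because `g s = O(s ^ (-(d + α)))`. Dominated convergence
concludes.
-/

open MeasureTheory Filter Real Set
open Asymptotics
open scoped Topology

theorem isBigO_rpow_neg_of_tendsto_rpow_mul {b C : ℝ} {g : ℝ → ℝ}
    (h : Tendsto (fun u => u ^ b * g u) atTop (𝓝 C)) : g =O[atTop] fun u => u ^ (-b) := by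
  have hO := (isBigO_refl (fun u : ℝ => u ^ (-b)) atTop).mul (h.isBigO_one ℝ)
  refine (hO.congr' ?_ (by simp)).mono le_rfl
  filter_upwards [eventually_gt_atTop 0] with u hu
  rw [rpow_neg hu.le, inv_mul_cancel_left₀ (rpow_pos_of_pos hu b).ne']

theorem integrableOn_Ioi_rpow_mul_of_isBigO {a b : ℝ} (ha : -1 < a) (hab : a - b < -1)
    {g : ℝ → ℝ} (hg : ContinuousOn g (Ici 0)) (hgb : g =O[atTop] fun u => u ^ (-b)) :
    IntegrableOn (fun u => u ^ a * g u) (Ioi 0) := by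
  have hcont : ContinuousOn (fun u => u ^ a * g u) (Ici 1) := fun u hu =>
    ((continuousAt_rpow_const u a (Or.inl (by linarith [mem_Ici.mp hu]))).continuousWithinAt).mul
      (hg.mono (Ici_subset_Ici.mpr zero_le_one) u hu)
  rw [← Ioc_union_Ioi_eq_Ioi zero_le_one]
  refine IntegrableOn.union ?_ ?_
  · exact (intervalIntegral.intervalIntegrable_rpow' ha).1.mul_continuousOn_of_subset
      (hg.mono Icc_subset_Ici_self) measurableSet_Ioc isCompact_Icc Ioc_subset_Icc_self
  · have hO : (fun u => u ^ a * g u) =O[atTop] fun u => u ^ (a - b) := by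
      refine ((isBigO_refl (fun u : ℝ => u ^ a) atTop).mul hgb).trans_eventuallyEq ?_
      filter_upwards [eventually_gt_atTop 0] with u hu
      rw [← rpow_add hu, sub_eq_add_neg]
    exact ((hcont.locallyIntegrableOn measurableSet_Ici).integrableOn_of_isBigO_atTop hO
      (integrableAtFilter_rpow_atTop_iff.mpr hab)).mono_set Ioi_subset_Ici_self

theorem integral_comp_rpow_neg_inv_eq {α p r : ℝ} (hα : 0 < α) (hr : 0 < r) (f g : ℝ → ℝ) :
    ∫ t in Ioi 0, f t * t ^ (-p / α) * g (r * t ^ (-(1 / α)))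
      = α * r ^ (α - p) * ∫ s in Ioi 0, f ((r / s) ^ α) * (s ^ (p - α - 1) * g s) := by
  set K : ℝ → ℝ := fun s => f ((r / s) ^ α) * (s ^ (p - α - 1) * g s)
  have hpt : ∀ x ∈ Ioi (0 : ℝ), (|-α| * x ^ (-α - 1)) •
      (f (x ^ (-α)) * (x ^ (-α)) ^ (-p / α) * g (r * (x ^ (-α)) ^ (-(1 / α))))
      = (α * r ^ (α + 1 - p)) * K (r * x) := by
    intro x hx
    have hx : 0 < x := hx
    have e1 : (x ^ (-α)) ^ (-p / α) = x ^ p := by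
      rw [← rpow_mul hx.le]; congr 1; field_simp
    have e2 : (x ^ (-α)) ^ (-(1 / α)) = x := by
      rw [← rpow_mul hx.le, show -α * -(1 / α) = 1 by field_simp, rpow_one]
    have e3 : (r / (r * x)) ^ α = x ^ (-α) := by
      rw [div_mul_cancel_left₀ hr.ne', inv_rpow hx.le, rpow_neg hx.le]
    have e4 : r ^ (α + 1 - p) * (r * x) ^ (p - α - 1) = x ^ (-α - 1) * x ^ p := by
      rw [mul_rpow hr.le hx.le, ← mul_assoc, ← rpow_add hr, ← rpow_add hx]
      ring_nf; rw [rpow_zero, one_mul]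
    simp only [K, smul_eq_mul, e1, e2, e3, abs_neg, abs_of_pos hα]
    linear_combination (α * f (x ^ (-α)) * g (r * x)) * e4.symm
  rw [← integral_comp_rpow_Ioi _ (neg_ne_zero.mpr hα.ne'),
    setIntegral_congr_fun measurableSet_Ioi hpt, integral_const_mul,
    integral_comp_mul_left_Ioi K 0 hr, mul_zero, smul_eq_mul, ← mul_assoc, mul_assoc α,
    ← rpow_neg_one r, ← rpow_add hr]
  ring_nf

theorem tendsto_integral_comp_div_rpow_mul {α K : ℝ} (hα : 0 < α) {h F : ℝ → ℝ}
    (hm : Measurable h) (h0 : ContinuousAt h 0) (hK : ∀ x, 0 ≤ x → ‖h x‖ ≤ K)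
    (hF : IntegrableOn F (Ioi 0)) :
    Tendsto (fun r => ∫ u in Ioi 0, h ((r / u) ^ α) * F u) (𝓝[>] 0)
      (𝓝 (h 0 * ∫ u in Ioi 0, F u)) := by
  rw [← integral_const_mul]
  refine tendsto_integral_filter_of_dominated_convergence (fun u => K * ‖F u‖) ?_ ?_
    (hF.norm.const_mul K) ?_
  · exact Eventually.of_forall fun r =>
      ((hm.comp ((measurable_const.div measurable_id).pow_const α)).aestronglyMeasurable).mul
        hF.aestronglyMeasurable
  · filter_upwards [self_mem_nhdsWithin] with r hr
    filter_upwards [ae_restrict_mem measurableSet_Ioi] with u hu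
    rw [norm_mul]
    exact mul_le_mul_of_nonneg_right
      (hK _ (rpow_nonneg (div_nonneg hr.le (le_of_lt hu)) _)) (norm_nonneg _)
  · refine Eventually.of_forall fun u => Tendsto.mul_const _ ?_
    have hpow : Tendsto (fun r => (r / u) ^ α) (𝓝 0) (𝓝 0) := by
      simpa [zero_rpow hα.ne'] using
        ((continuous_id.div_const u).rpow_const fun _ => Or.inr hα.le).tendsto 0
    exact h0.tendsto.comp (hpow.mono_left nhdsWithin_le_nhds)

theorem stmt_2_general (d : ℕ) (α : ℝ) (hα : 0 < α)
    (hdα : α < (d : ℝ)) (β : ℝ) (hβ : 0 < β) (C : ℝ)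
    (g : ℝ → ℝ) (hg : Continuous g)
    (hglim : Tendsto (fun r : ℝ => r ^ ((d : ℝ) + α) * g r) atTop (nhds C)) :
    Tendsto
      (fun r : ℝ =>
        r ^ ((d : ℝ) - α) *
          ∫ t in Ioi (0 : ℝ), Real.exp (-β * t) * t ^ (-(d : ℝ) / α) * g (r * t ^ (-(1 / α))))
      (nhdsWithin 0 (Ioi 0))
      (nhds (α * ∫ s in Ioi (0 : ℝ), s ^ ((d : ℝ) - α - 1) * g s)) := by
  have hI : IntegrableOn (fun s => s ^ ((d : ℝ) - α - 1) * g s) (Ioi 0) :=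
    integrableOn_Ioi_rpow_mul_of_isBigO (by linarith) (by linarith) hg.continuousOn
      (isBigO_rpow_neg_of_tendsto_rpow_mul hglim)
  have hexp_le : ∀ x : ℝ, 0 ≤ x → ‖exp (-β * x)‖ ≤ 1 := fun x hx => by
    rw [norm_of_nonneg (exp_pos _).le, exp_le_one_iff]
    nlinarith
  have hlim := tendsto_integral_comp_div_rpow_mul hα (by fun_prop) (by fun_prop) hexp_le hI
  rw [mul_zero, exp_zero, one_mul] at hlim
  refine (hlim.const_mul α).congr' ?_
  filter_upwards [self_mem_nhdsWithin] with r hr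
  have hcancel : r ^ ((d : ℝ) - α) * r ^ (α - d) = 1 := by
    rw [← rpow_add hr, sub_add_sub_cancel', sub_self, rpow_zero]
  rw [integral_comp_rpow_neg_inv_eq hα hr, ← mul_assoc, ← mul_assoc, mul_right_comm _ α, hcancel,
    one_mul]

theorem stmt_2 (d : ℕ) (hd : 1 ≤ d) (α : ℝ) (hα : 0 < α) (hα2 : α < 2)
    (hdα : α < (d : ℝ)) (β : ℝ) (hβ : 0 < β) (C : ℝ) (hC : 0 < C)
    (g : ℝ → ℝ) (hg : Continuous g) (hgpos : ∀ r, 0 ≤ r → 0 < g r)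
    (hgbd : ∃ B : ℝ, ∀ r, 0 ≤ r → g r ≤ B)
    (hglim : Tendsto (fun r : ℝ => r ^ ((d : ℝ) + α) * g r) atTop (nhds C)) :
    Tendsto
      (fun r : ℝ =>
        r ^ ((d : ℝ) - α) *
          ∫ t in Ioi (0 : ℝ), Real.exp (-β * t) * t ^ (-(d : ℝ) / α) * g (r * t ^ (-(1 / α))))
      (nhdsWithin 0 (Ioi 0))
      (nhds (α * ∫ s in Ioi (0 : ℝ), s ^ ((d : ℝ) - α - 1) * g s)) :=
  stmt_2_general d α hα hdα β hβ C g hg hglim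
end

section
/- Let d = α = 1, and let g : [0,∞) → (0,∞) be continuous with (i) |g(0) − g(r)| ≤ c r² for all r ≥ 0 and some c > 0, and (ii) r² g(r) → C as r → ∞ for some C > 0. For β > 0 define w_β(r) = ∫_0^∞ e^{-βt} t^{-1} g(r/t) dt. Then w_β(r) / log(1/r) → g(0) as r → 0⁺. -/
/-!
Split `∫₀^∞ e^{-βt} t⁻¹ g(r/t) dt` at `t = r` and `t = 1`. On `(0, r]` the decay
`g x = O(x⁻²)` bounds the integrand by `K / r`, and on `(1, ∞)` the factor `e^{-βt}` keeps the
piece bounded. On `(r, 1]` the quadratic modulus of `g` at `0` and `1 - e^{-βt} ≤ βt` show that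
the integrand differs from `g 0 / t` by at most `β |g 0| + c r² / t³`, whose integral is bounded.
Hence the integral is `g 0 · log (1 / r) + O(1)` as `r → 0⁺`.
-/

open MeasureTheory Filter Real Set Topology Asymptotics

lemma tendsto_div_of_abs_sub_mul_le {α : Type*} {l : Filter α} {f L : α → ℝ} {a B : ℝ}
    (hL : Tendsto L l atTop) (hB : ∀ᶠ x in l, |f x - a * L x| ≤ B) :
    Tendsto (fun x => f x / L x) l (𝓝 a) := by
  have hO : (fun x => f x - a * L x) =O[l] (fun _ => (1 : ℝ)) :=
    IsBigO.of_bound B (hB.mono fun x hx => by simpa using hx)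
  have ho : (fun x => f x - a * L x) =o[l] L :=
    hO.trans_isLittleO ((isLittleO_one_left_iff ℝ).2 (tendsto_abs_atTop_atTop.comp hL))
  have h := ho.tendsto_div_nhds_zero.const_add a
  rw [add_zero] at h
  refine h.congr' ?_
  filter_upwards [hL.eventually_ne_atTop 0] with x hx
  field_simp
  ring

lemma tendsto_log_one_div_nhdsGT_zero : Tendsto (fun r : ℝ => log (1 / r)) (𝓝[>] 0) atTop := by
  refine (tendsto_neg_atBot_atTop.comp tendsto_log_nhdsGT_zero).congr fun r => ?_
  simp [log_inv]

lemma exists_abs_le_of_tendsto_atTop {h : ℝ → ℝ} (hh : Continuous h) {C : ℝ}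
    (hC : Tendsto h atTop (𝓝 C)) (a : ℝ) : ∃ K, ∀ x, a ≤ x → |h x| ≤ K := by
  obtain ⟨A, hA⟩ := eventually_atTop.1 (hC.abs.eventually (eventually_le_nhds (lt_add_one |C|)))
  obtain ⟨K, hK⟩ := isCompact_Icc.exists_bound_of_continuousOn (hh.continuousOn (s := Icc a A))
  refine ⟨max K (|C| + 1), fun x hax => ?_⟩
  rcases le_total x A with hxA | hAx
  · exact le_max_of_le_left (hK x ⟨hax, hxA⟩)
  · exact le_max_of_le_right (hA x hAx)

noncomputable def resolventIntegrand (β : ℝ) (g : ℝ → ℝ) (r t : ℝ) : ℝ :=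
  exp (-β * t) * t⁻¹ * g (r / t)

section resolventIntegrand

variable {β : ℝ} {g : ℝ → ℝ} {r t : ℝ}

lemma continuousOn_resolventIntegrand (hg : Continuous g) (r : ℝ) :
    ContinuousOn (resolventIntegrand β g r) (Ioi 0) := by
  have hinv : ContinuousOn (fun t : ℝ => t⁻¹) (Ioi 0) :=
    continuousOn_inv₀.mono fun t ht => ne_of_gt ht
  exact ((continuous_exp.comp (continuous_const.mul continuous_id)).continuousOn.mul hinv).mul
    (hg.comp_continuousOn (continuousOn_const.mul hinv))

lemma abs_resolventIntegrand_le (hβ : 0 ≤ β) (ht : 0 < t) :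
    |resolventIntegrand β g r t| ≤ t⁻¹ * |g (r / t)| := by
  rw [resolventIntegrand, abs_mul, abs_mul, abs_of_pos (exp_pos _), abs_of_pos (inv_pos.2 ht),
    mul_assoc]
  exact mul_le_of_le_one_left (by positivity) (exp_le_one_iff.2 (by nlinarith))

lemma abs_resolventIntegrand_le_of_le {K : ℝ} (hβ : 0 ≤ β)
    (hK : ∀ x, 1 ≤ x → |x ^ 2 * g x| ≤ K) (ht : 0 < t) (htr : t ≤ r) :
    |resolventIntegrand β g r t| ≤ K / r := by
  have hr : 0 < r := ht.trans_le htr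
  have hg : |g (r / t)| ≤ K * (t / r) ^ 2 := by
    have h := hK (r / t) ((one_le_div ht).2 htr)
    rw [abs_mul, abs_of_nonneg (by positivity)] at h
    rw [div_pow, ← le_div_iff₀' (by positivity), div_div_eq_mul_div] at h
    exact h.trans_eq (by ring)
  have hK0 : 0 ≤ K := (abs_nonneg _).trans (hK 1 le_rfl)
  calc |resolventIntegrand β g r t| ≤ t⁻¹ * (K * (t / r) ^ 2) :=
        (abs_resolventIntegrand_le hβ ht).trans (by gcongr)
    _ = K / r * (t / r) := by field_simp
    _ ≤ K / r := mul_le_of_le_one_right (by positivity) ((div_le_one hr).2 htr)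

lemma integrableOn_resolventIntegrand_Ioc_zero {K : ℝ} (hβ : 0 ≤ β) (hg : Continuous g)
    (hK : ∀ x, 1 ≤ x → |x ^ 2 * g x| ≤ K) :
    IntegrableOn (resolventIntegrand β g r) (Ioc 0 r) :=
  .of_bound measure_Ioc_lt_top
    (((continuousOn_resolventIntegrand hg r).mono Ioc_subset_Ioi_self).aestronglyMeasurable
      measurableSet_Ioc) (K / r)
    (by
      filter_upwards [ae_restrict_mem measurableSet_Ioc] with t ht
      exact abs_resolventIntegrand_le_of_le hβ hK ht.1 ht.2)

lemma abs_setIntegral_resolventIntegrand_Ioc_zero_le {K : ℝ} (hβ : 0 ≤ β)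
    (hK : ∀ x, 1 ≤ x → |x ^ 2 * g x| ≤ K) (hr : 0 < r) :
    |∫ t in Ioc 0 r, resolventIntegrand β g r t| ≤ K := by
  have h := norm_setIntegral_le_of_norm_le_const (μ := volume) (f := resolventIntegrand β g r)
    measure_Ioc_lt_top fun t ht => abs_resolventIntegrand_le_of_le hβ hK ht.1 ht.2
  rwa [Real.volume_real_Ioc_of_le hr.le, sub_zero, div_mul_cancel₀ _ hr.ne'] at h

lemma abs_resolventIntegrand_le_of_one_lt {M : ℝ} (hM : ∀ x ∈ Icc 0 1, |g x| ≤ M)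
    (hr : 0 ≤ r) (hr1 : r ≤ 1) (ht : 1 < t) :
    |resolventIntegrand β g r t| ≤ M * exp (-β * t) := by
  have ht0 : 0 < t := one_pos.trans ht
  rw [resolventIntegrand, abs_mul, abs_mul, abs_of_pos (exp_pos _), abs_of_pos (inv_pos.2 ht0),
    mul_comm M]
  have hg := hM (r / t) ⟨by positivity, (div_le_one ht0).2 (by linarith)⟩
  calc exp (-β * t) * t⁻¹ * |g (r / t)| ≤ exp (-β * t) * 1 * M := by
        gcongr
        exact inv_le_one_of_one_le₀ ht.le
    _ = exp (-β * t) * M := by ring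

lemma integrableOn_resolventIntegrand_Ioi_one {M : ℝ} (hβ : 0 < β) (hg : Continuous g)
    (hM : ∀ x ∈ Icc 0 1, |g x| ≤ M) (hr : 0 ≤ r) (hr1 : r ≤ 1) :
    IntegrableOn (resolventIntegrand β g r) (Ioi 1) := by
  refine Integrable.mono' (f := resolventIntegrand β g r)
    ((exp_neg_integrableOn_Ioi 1 hβ).const_mul M) ?_ ?_
  · exact ((continuousOn_resolventIntegrand hg r).mono fun t (ht : 1 < t) => one_pos.trans ht)
      |>.aestronglyMeasurable measurableSet_Ioi
  · filter_upwards [ae_restrict_mem measurableSet_Ioi] with t ht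
    exact abs_resolventIntegrand_le_of_one_lt hM hr hr1 ht

lemma abs_setIntegral_resolventIntegrand_Ioi_one_le {M : ℝ} (hβ : 0 < β)
    (hM : ∀ x ∈ Icc 0 1, |g x| ≤ M) (hr : 0 ≤ r) (hr1 : r ≤ 1) :
    |∫ t in Ioi 1, resolventIntegrand β g r t| ≤ M * exp (-β) / β := by
  have h := norm_integral_le_of_norm_le (f := resolventIntegrand β g r)
      ((exp_neg_integrableOn_Ioi 1 hβ).const_mul M) <| by
    filter_upwards [ae_restrict_mem measurableSet_Ioi] with t ht
    exact abs_resolventIntegrand_le_of_one_lt hM hr hr1 ht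
  rw [integral_const_mul, integral_exp_mul_Ioi (neg_lt_zero.2 hβ), neg_div_neg_eq, mul_one,
    ← mul_div_assoc] at h
  exact h

lemma abs_resolventIntegrand_sub_le {c : ℝ} (hβ : 0 ≤ β)
    (hg0 : ∀ x, 0 ≤ x → |g 0 - g x| ≤ c * x ^ 2) (hr : 0 ≤ r) (ht : 0 < t) :
    |resolventIntegrand β g r t - g 0 * t⁻¹| ≤ β * |g 0| + c * r ^ 2 * (t ^ 3)⁻¹ := by
  have hexp : exp (-β * t) ≤ 1 := exp_le_one_iff.2 (by nlinarith)
  have hshift : |exp (-β * t) * (g (r / t) - g 0)| ≤ c * (r / t) ^ 2 := by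
    rw [abs_mul, abs_of_pos (exp_pos _), abs_sub_comm]
    exact mul_le_of_le_one_left (abs_nonneg _) hexp |>.trans (hg0 _ (by positivity))
  have hdamp : |(exp (-β * t) - 1) * g 0| ≤ β * t * |g 0| := by
    rw [abs_mul, abs_of_nonpos (sub_nonpos.2 hexp)]
    gcongr
    linarith [add_one_le_exp (-β * t)]
  calc |resolventIntegrand β g r t - g 0 * t⁻¹|
      = |t⁻¹ * (exp (-β * t) * (g (r / t) - g 0) + (exp (-β * t) - 1) * g 0)| := by
        rw [resolventIntegrand]
        ring_nf
    _ = t⁻¹ * |exp (-β * t) * (g (r / t) - g 0) + (exp (-β * t) - 1) * g 0| := by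
        rw [abs_mul, abs_of_pos (inv_pos.2 ht)]
    _ ≤ t⁻¹ * (c * (r / t) ^ 2 + β * t * |g 0|) := by
        gcongr
        exact (abs_add_le _ _).trans (add_le_add hshift hdamp)
    _ = β * |g 0| + c * r ^ 2 * (t ^ 3)⁻¹ := by
        field_simp
        ring

lemma integral_inv_pow_three {r : ℝ} (hr : 0 < r) :
    ∫ t in r..1, (t ^ 3)⁻¹ = ((r ^ 2)⁻¹ - 1) / 2 := by
  have h := integral_zpow (a := r) (b := 1) (n := -3)
    (Or.inr ⟨by norm_num, notMem_uIcc_of_lt hr one_pos⟩)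
  norm_num at h
  rw [h]
  ring

lemma abs_integral_resolventIntegrand_sub_log_le {c : ℝ} (hβ : 0 ≤ β) (hg : Continuous g)
    (hc : 0 ≤ c) (hg0 : ∀ x, 0 ≤ x → |g 0 - g x| ≤ c * x ^ 2) (hr : 0 < r)
    (hr1 : r ≤ 1) :
    |(∫ t in r..1, resolventIntegrand β g r t) - g 0 * log (1 / r)| ≤ β * |g 0| + c / 2 := by
  have hpos : uIcc r 1 ⊆ Ioi 0 := by
    rw [uIcc_of_le hr1]
    exact fun t ht => hr.trans_le ht.1
  have hinv : ContinuousOn (fun t : ℝ => t⁻¹) (uIcc r 1) :=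
    continuousOn_inv₀.mono fun t ht => ne_of_gt (hpos ht)
  have hcube : ContinuousOn (fun t : ℝ => (t ^ 3)⁻¹) (uIcc r 1) :=
    (continuousOn_id.pow 3).inv₀ fun t ht => pow_ne_zero 3 (ne_of_gt (hpos ht))
  have hlog : ∫ t in r..1, g 0 * t⁻¹ = g 0 * log (1 / r) := by
    rw [intervalIntegral.integral_const_mul, integral_inv_of_pos hr one_pos]
  have hbound : ∫ t in r..1, (β * |g 0| + c * r ^ 2 * (t ^ 3)⁻¹)
      = β * |g 0| * (1 - r) + c * (1 - r ^ 2) / 2 := by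
    rw [intervalIntegral.integral_add intervalIntegrable_const
      (hcube.intervalIntegrable.const_mul _), intervalIntegral.integral_const,
      intervalIntegral.integral_const_mul, integral_inv_pow_three hr, smul_eq_mul]
    field_simp
  rw [← hlog, ← intervalIntegral.integral_sub
    ((continuousOn_resolventIntegrand hg r).mono hpos).intervalIntegrable
    (hinv.const_mul _).intervalIntegrable]
  calc ‖∫ t in r..1, (resolventIntegrand β g r t - g 0 * t⁻¹)‖
      ≤ ∫ t in r..1, (β * |g 0| + c * r ^ 2 * (t ^ 3)⁻¹) := by
        refine intervalIntegral.norm_integral_le_of_norm_le hr1 (.of_forall fun t ht => ?_) ?_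
        · exact abs_resolventIntegrand_sub_le hβ hg0 hr.le (hr.trans ht.1)
        · exact (continuousOn_const.add (hcube.const_mul _)).intervalIntegrable
    _ = β * |g 0| * (1 - r) + c * (1 - r ^ 2) / 2 := hbound
    _ ≤ β * |g 0| + c / 2 := by nlinarith [mul_nonneg hβ (abs_nonneg (g 0))]

lemma abs_setIntegral_Ioi_resolventIntegrand_sub_log_le {c M K : ℝ} (hβ : 0 < β)
    (hg : Continuous g) (hc : 0 ≤ c) (hg0 : ∀ x, 0 ≤ x → |g 0 - g x| ≤ c * x ^ 2)
    (hM : ∀ x ∈ Icc 0 1, |g x| ≤ M) (hK : ∀ x, 1 ≤ x → |x ^ 2 * g x| ≤ K) (hr : 0 < r)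
    (hr1 : r ≤ 1) :
    |(∫ t in Ioi 0, resolventIntegrand β g r t) - g 0 * log (1 / r)|
      ≤ K + (β * |g 0| + c / 2) + M * exp (-β) / β := by
  have hnear := integrableOn_resolventIntegrand_Ioc_zero (r := r) hβ.le hg hK
  have hmid : IntegrableOn (resolventIntegrand β g r) (Ioc r 1) :=
    ((continuousOn_resolventIntegrand hg r).mono fun t ht => hr.trans_le ht.1)
      |>.integrableOn_Icc.mono_set Ioc_subset_Icc_self
  have hfar := integrableOn_resolventIntegrand_Ioi_one hβ hg hM hr.le hr1
  have hIoc01 : IntegrableOn (resolventIntegrand β g r) (Ioc 0 1) := by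
    rw [← Ioc_union_Ioc_eq_Ioc hr.le hr1]
    exact hnear.union hmid
  have hsplit : ∫ t in Ioi 0, resolventIntegrand β g r t
      = (∫ t in Ioc 0 r, resolventIntegrand β g r t) + (∫ t in r..1, resolventIntegrand β g r t)
        + ∫ t in Ioi 1, resolventIntegrand β g r t := by
    rw [← Ioc_union_Ioi_eq_Ioi zero_le_one,
      setIntegral_union (Ioc_disjoint_Ioi le_rfl) measurableSet_Ioi hIoc01 hfar,
      ← Ioc_union_Ioc_eq_Ioc hr.le hr1,
      setIntegral_union (Ioc_disjoint_Ioc_of_le le_rfl) measurableSet_Ioc hnear hmid,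
      intervalIntegral.integral_of_le hr1]
  rw [hsplit, add_sub_right_comm, add_sub_assoc]
  calc _ ≤ |∫ t in Ioc 0 r, resolventIntegrand β g r t|
        + |(∫ t in r..1, resolventIntegrand β g r t) - g 0 * log (1 / r)|
        + |∫ t in Ioi 1, resolventIntegrand β g r t| :=
        (abs_add_le _ _).trans (by gcongr; exact abs_add_le _ _)
    _ ≤ _ := by
      gcongr
      · exact abs_setIntegral_resolventIntegrand_Ioc_zero_le hβ.le hK hr
      · exact abs_integral_resolventIntegrand_sub_log_le hβ.le hg hc hg0 hr hr1
      · exact abs_setIntegral_resolventIntegrand_Ioi_one_le hβ hM hr.le hr1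

end resolventIntegrand

theorem stmt_3_general (β : ℝ) (hβ : 0 < β) (c C : ℝ) (hc : 0 < c)
    (g : ℝ → ℝ) (hg : Continuous g)
    (hg0 : ∀ r, 0 ≤ r → |g 0 - g r| ≤ c * r ^ 2)
    (hglim : Tendsto (fun r : ℝ => r ^ 2 * g r) atTop (nhds C)) :
    Tendsto
      (fun r : ℝ =>
        (∫ t in Ioi (0 : ℝ), Real.exp (-β * t) * t⁻¹ * g (r / t)) / Real.log (1 / r))
      (nhdsWithin 0 (Ioi 0)) (nhds (g 0)) := by
  obtain ⟨M, hM⟩ := isCompact_Icc.exists_bound_of_continuousOn (hg.continuousOn (s := Icc 0 1))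
  obtain ⟨K, hK⟩ := exists_abs_le_of_tendsto_atTop (by fun_prop) hglim 1
  refine tendsto_div_of_abs_sub_mul_le (B := K + (β * |g 0| + c / 2) + M * exp (-β) / β)
    tendsto_log_one_div_nhdsGT_zero ?_
  filter_upwards [Ioo_mem_nhdsGT one_pos] with r hr
  exact abs_setIntegral_Ioi_resolventIntegrand_sub_log_le hβ hg hc.le hg0 hM hK hr.1 hr.2.le

theorem stmt_3 (β : ℝ) (hβ : 0 < β) (c C : ℝ) (hc : 0 < c) (hC : 0 < C)
    (g : ℝ → ℝ) (hg : Continuous g) (hgpos : ∀ r, 0 ≤ r → 0 < g r)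
    (hg0 : ∀ r, 0 ≤ r → |g 0 - g r| ≤ c * r ^ 2)
    (hglim : Tendsto (fun r : ℝ => r ^ 2 * g r) atTop (nhds C)) :
    Tendsto
      (fun r : ℝ =>
        (∫ t in Ioi (0 : ℝ), Real.exp (-β * t) * t⁻¹ * g (r / t)) / Real.log (1 / r))
      (nhdsWithin 0 (Ioi 0)) (nhds (g 0)) :=
  stmt_3_general β hβ c C hc g hg hg0 hglim
end

section
/- Let λ < 0, α > 0, d ≥ 1, M > 0, and let g : (0,∞) → (0,∞) be continuous with sup_r r^{d+α} g(r) < ∞. Let R : (0,∞) → (0,∞) satisfy R(t)/t^{1/α} → ∞ as t → ∞ and R(t) ≥ 2M. Define J(t) = e^{−λt} (R(t)−M)^d ∫_{t^{1/α}}^∞ e^{λ u^α} g((R(t)−M)/u) u^{−d−1} du. Then there exist c > 0 and T > 0 such that J(t) ≤ c / R(t)^α for all t ≥ T. -/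
/-!
Since `r ^ (d + α) * g r ≤ B` for every `r > 0`, there is no need to split the integral at
`u = R t`: the integrand is at most
`B (R t - M) ^ (-(d + α)) * exp (l u ^ α) * u ^ (α - 1)`, and the last factor has the explicit
primitive `exp (l u ^ α) / (l α)`. The integral is therefore at most a constant times
`(R t - M) ^ (-(d + α)) * exp (l t)`; the prefactor `exp (-l t) (R t - M) ^ d` cancels the
exponential and leaves `(R t - M) ^ (-α) ≤ 2 ^ α / R t ^ α`, because `R t ≥ 2 M`.
-/

open MeasureTheory Filter Real Set Topology

section ExpRpowIntegral

variable {l α a : ℝ}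

lemma hasDerivAt_exp_mul_rpow_div {x : ℝ} (hl : l ≠ 0) (hα : α ≠ 0) (hx : x ≠ 0) :
    HasDerivAt (fun u : ℝ => exp (l * u ^ α) / (l * α)) (exp (l * x ^ α) * x ^ (α - 1)) x := by
  refine (((hasDerivAt_rpow_const (p := α) (Or.inl hx)).const_mul l).exp.div_const
    (l * α)).congr_deriv ?_
  field_simp

lemma tendsto_exp_mul_rpow_atTop (hl : l < 0) (hα : 0 < α) :
    Tendsto (fun u : ℝ => exp (l * u ^ α)) atTop (𝓝 0) :=
  tendsto_exp_atBot.comp ((tendsto_const_mul_atBot_of_neg hl).2 (tendsto_rpow_atTop hα))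

lemma tendsto_exp_mul_rpow_div_atTop (hl : l < 0) (hα : 0 < α) :
    Tendsto (fun u : ℝ => exp (l * u ^ α) / (l * α)) atTop (𝓝 0) := by
  simpa using (tendsto_exp_mul_rpow_atTop hl hα).div_const (l * α)

lemma exp_mul_rpow_mul_rpow_sub_one_nonneg {x : ℝ} (hx : 0 ≤ x) :
    0 ≤ exp (l * x ^ α) * x ^ (α - 1) :=
  mul_nonneg (exp_pos _).le (rpow_nonneg hx _)

lemma integrableOn_Ioi_exp_mul_rpow_mul_rpow_sub_one (hl : l < 0) (hα : 0 < α) (ha : 0 < a) :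
    IntegrableOn (fun u : ℝ => exp (l * u ^ α) * u ^ (α - 1)) (Ioi a) :=
  integrableOn_Ioi_deriv_of_nonneg'
    (fun _ hx => hasDerivAt_exp_mul_rpow_div hl.ne hα.ne' (ha.trans_le hx).ne')
    (fun _ hx => exp_mul_rpow_mul_rpow_sub_one_nonneg (ha.trans hx).le)
    (tendsto_exp_mul_rpow_div_atTop hl hα)

lemma integral_Ioi_exp_mul_rpow_mul_rpow_sub_one (hl : l < 0) (hα : 0 < α) (ha : 0 < a) :
    ∫ u in Ioi a, exp (l * u ^ α) * u ^ (α - 1) = exp (l * a ^ α) / (-(l * α)) := by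
  rw [integral_Ioi_of_hasDerivAt_of_nonneg'
    (fun _ hx => hasDerivAt_exp_mul_rpow_div hl.ne hα.ne' (ha.trans_le hx).ne')
    (fun _ hx => exp_mul_rpow_mul_rpow_sub_one_nonneg (ha.trans hx).le)
    (tendsto_exp_mul_rpow_div_atTop hl hα)]
  ring

end ExpRpowIntegral

section PolynomialDecay

variable {g : ℝ → ℝ} {p α B : ℝ}

lemma le_mul_rpow_neg_of_rpow_mul_le {r : ℝ} (hr : 0 < r) (hB : r ^ p * g r ≤ B) :
    g r ≤ B * r ^ (-p) := by
  rw [rpow_neg hr.le, ← div_eq_mul_inv, le_div_iff₀ (rpow_pos_of_pos hr p), mul_comm]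
  exact hB

lemma apply_div_mul_rpow_le {b u : ℝ} (hB : ∀ r > 0, r ^ (p + α) * g r ≤ B)
    (hb : 0 < b) (hu : 0 < u) :
    g (b / u) * u ^ (-p - 1) ≤ B * b ^ (-(p + α)) * u ^ (α - 1) := by
  have hbu : 0 < b / u := div_pos hb hu
  calc g (b / u) * u ^ (-p - 1)
      ≤ B * (b / u) ^ (-(p + α)) * u ^ (-p - 1) := by
        gcongr
        exact le_mul_rpow_neg_of_rpow_mul_le hbu (hB _ hbu)
    _ = B * b ^ (-(p + α)) * u ^ (α - 1) := by
        rw [div_rpow hb.le hu.le, div_eq_mul_inv, ← rpow_neg hu.le, mul_assoc, mul_assoc,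
          ← rpow_add hu]
        ring_nf

lemma setIntegral_Ioi_exp_mul_apply_div_mul_rpow_le {l a b : ℝ} (hl : l < 0) (hα : 0 < α)
    (ha : 0 < a) (hb : 0 < b) (hg : ∀ r > 0, 0 ≤ g r) (hB : ∀ r > 0, r ^ (p + α) * g r ≤ B) :
    ∫ u in Ioi a, exp (l * u ^ α) * g (b / u) * u ^ (-p - 1) ≤
      B * b ^ (-(p + α)) * (exp (l * a ^ α) / (-(l * α))) := by
  rw [← integral_Ioi_exp_mul_rpow_mul_rpow_sub_one hl hα ha, ← integral_const_mul]
  refine setIntegral_mono_of_nonneg (fun u hu => ?_) (fun u hu => ?_)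
    ((integrableOn_Ioi_exp_mul_rpow_mul_rpow_sub_one hl hα ha).const_mul _)
  · have hu : 0 < u := ha.trans hu
    have := hg (b / u) (div_pos hb hu)
    positivity
  · have := mul_le_mul_of_nonneg_left (apply_div_mul_rpow_le hB hb (ha.trans hu))
      (exp_pos (l * u ^ α)).le
    linarith

lemma exp_neg_mul_rpow_mul_setIntegral_le {l t b : ℝ} (hl : l < 0) (hα : 0 < α) (ht : 0 < t)
    (hb : 0 < b) (hg : ∀ r > 0, 0 ≤ g r) (hB : ∀ r > 0, r ^ (p + α) * g r ≤ B) :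
    exp (-l * t) * b ^ p * ∫ u in Ioi (t ^ (1 / α)), exp (l * u ^ α) * g (b / u) * u ^ (-p - 1) ≤
      B / -(l * α) * b ^ (-α) := by
  have hint := setIntegral_Ioi_exp_mul_apply_div_mul_rpow_le hl hα (rpow_pos_of_pos ht (1 / α))
    hb hg hB
  rw [← rpow_mul ht.le, one_div_mul_cancel hα.ne', rpow_one] at hint
  calc exp (-l * t) * b ^ p * ∫ u in Ioi (t ^ (1 / α)), exp (l * u ^ α) * g (b / u) * u ^ (-p - 1)
      ≤ exp (-l * t) * b ^ p * (B * b ^ (-(p + α)) * (exp (l * t) / -(l * α))) := by gcongr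
    _ = B / -(l * α) * b ^ (-α) := by
        have hexp : exp (-l * t) * exp (l * t) = 1 := by rw [← exp_add]; simp
        have hpow : b ^ p * b ^ (-(p + α)) = b ^ (-α) := by rw [← rpow_add hb]; ring_nf
        rw [← hpow]
        linear_combination (B / -(l * α) * b ^ p * b ^ (-(p + α))) * hexp

end PolynomialDecay

lemma rpow_neg_le_two_rpow_div_rpow {α b R : ℝ} (hα : 0 ≤ α) (hR : 0 < R) (hb : R / 2 ≤ b) :
    b ^ (-α) ≤ 2 ^ α / R ^ α := by
  calc b ^ (-α) ≤ (R / 2) ^ (-α) := rpow_le_rpow_of_nonpos (by positivity) hb (neg_nonpos.2 hα)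
    _ = 2 ^ α / R ^ α := by
      rw [rpow_neg (by positivity), div_rpow hR.le zero_le_two, inv_div]

theorem stmt_14_general (d : ℕ) (α : ℝ) (hα : 0 < α)
    (l : ℝ) (hl : l < 0) (M : ℝ) (hM : 0 < M)
    (g : ℝ → ℝ) (hgpos : ∀ r > (0 : ℝ), 0 < g r)
    (hgbd : ∃ B : ℝ, ∀ r > (0 : ℝ), r ^ ((d : ℝ) + α) * g r ≤ B)
    (R : ℝ → ℝ) (hRM : ∀ t > (0 : ℝ), 2 * M ≤ R t)
    (J : ℝ → ℝ)
    (hJ : ∀ t : ℝ, J t =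
      Real.exp (-l * t) * (R t - M) ^ (d : ℕ) *
        ∫ u in Ioi (t ^ (1 / α)),
          Real.exp (l * u ^ α) * g ((R t - M) / u) * u ^ (-(d : ℝ) - 1)) :
    ∃ c > (0 : ℝ), ∃ T > (0 : ℝ), ∀ t : ℝ, T ≤ t → J t ≤ c / R t ^ α := by
  obtain ⟨B, hB⟩ := hgbd
  have hB0 : 0 < B := (hgpos 1 one_pos).trans_le (by simpa using hB 1 one_pos)
  have hlα : 0 < -(l * α) := neg_pos.2 (mul_neg_of_neg_of_pos hl hα)
  refine ⟨B * 2 ^ α / -(l * α), by positivity, 1, one_pos, fun t ht => ?_⟩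
  have hRt := hRM t (one_pos.trans_le ht)
  calc J t ≤ B / -(l * α) * (R t - M) ^ (-α) := by
        rw [hJ t, ← rpow_natCast]
        exact exp_neg_mul_rpow_mul_setIntegral_le hl hα (one_pos.trans_le ht) (by linarith)
          (fun r hr => (hgpos r hr).le) hB
    _ ≤ B / -(l * α) * (2 ^ α / R t ^ α) := by
        gcongr
        exact rpow_neg_le_two_rpow_div_rpow hα.le (by linarith) (by linarith)
    _ = B * 2 ^ α / -(l * α) / R t ^ α := by ring

theorem stmt_14 (d : ℕ) (hd : 1 ≤ d) (α : ℝ) (hα : 0 < α)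
    (l : ℝ) (hl : l < 0) (M : ℝ) (hM : 0 < M)
    (g : ℝ → ℝ) (hg : Continuous g) (hgpos : ∀ r > (0 : ℝ), 0 < g r)
    (hgbd : ∃ B : ℝ, ∀ r > (0 : ℝ), r ^ ((d : ℝ) + α) * g r ≤ B)
    (R : ℝ → ℝ) (hRM : ∀ t > (0 : ℝ), 2 * M ≤ R t)
    (hR : Tendsto (fun t : ℝ => R t / t ^ (1 / α)) atTop atTop)
    (J : ℝ → ℝ)
    (hJ : ∀ t : ℝ, J t =
      Real.exp (-l * t) * (R t - M) ^ (d : ℕ) *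
        ∫ u in Ioi (t ^ (1 / α)),
          Real.exp (l * u ^ α) * g ((R t - M) / u) * u ^ (-(d : ℝ) - 1)) :
    ∃ c > (0 : ℝ), ∃ T > (0 : ℝ), ∀ t : ℝ, T ≤ t → J t ≤ c / R t ^ α :=
  stmt_14_general d α hα l hl M hM g hgpos hgbd R hRM J hJ
end
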